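/- Let E ⊆ F be a field extension, let C_1 ⊆ F^ℓ be a nonzero F-linear code endowed with the Hamming metric, and let C_2 ⊆ F^N be a nonzero F-linear code endowed with the rank metric for F/E. Then the minimum sum-rank distance of the product code C_1 ⊗ C_2 ⊆ F^{ℓN}, with respect to the partition (N, …, N) and the extension F/E, satisfies d_SR(C_1 ⊗ C_2) = d_H(C_1) · d_R(C_2). -/

import Mathlib

/-!
A nonzero codeword `c` of `C₁ ⊗ C₂` has every row in `C₂` and every column in `C₁`. A nonzero
column has at least `d_H(C₁)` nonzero entries, so at least `d_H(C₁)` rows of `c` are nonzero, and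
each of them contributes at least `d_R(C₂)` to the sum-rank weight. Conversely, for minimum-weight
`u ∈ C₁` and `v ∈ C₂`, the `i`-th block of `u ⊗ v` is `uᵢ v`, which has rank weight `d_R(C₂)` when
`uᵢ ≠ 0` (multiplication by `uᵢ` is an `E`-linear automorphism of `F`) and `0` otherwise.
-/

/-- The Hamming weight of a vector: the number of nonzero coordinates. -/
noncomputable def hammingWt {F : Type*} [Zero F] {ℓ : ℕ} (u : Fin ℓ → F) : ℕ :=
  Nat.card {i : Fin ℓ // u i ≠ 0}

/-- The rank weight of a vector over `F` with respect to the extension `F/E`. -/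
noncomputable def rankWt (E : Type*) {F : Type*} [Field E] [Field F] [Algebra E F]
    {N : ℕ} (v : Fin N → F) : ℕ :=
  Module.finrank E (Submodule.span E (Set.range v) : Submodule E F)

/-- The sum-rank weight w.r.t. the partition `(N,…,N)` and the extension `F/E`. -/
noncomputable def srWt (E : Type*) {F : Type*} [Field E] [Field F] [Algebra E F]
    {ℓ N : ℕ} (c : Fin ℓ → Fin N → F) : ℕ :=
  ∑ i, rankWt E (c i)

/-- The product code `C₁ ⊗ C₂`: the `F`-span of the elementary tensors
`u ⊗ v = (u₀v | … | u_{ℓ-1}v)` with `u ∈ C₁`, `v ∈ C₂`. -/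
def prodCode (F : Type*) [Field F] {ℓ N : ℕ}
    (C₁ : Submodule F (Fin ℓ → F)) (C₂ : Submodule F (Fin N → F)) :
    Submodule F (Fin ℓ → Fin N → F) :=
  Submodule.span F {w | ∃ u ∈ C₁, ∃ v ∈ C₂, w = fun i j => u i * v j}

open Finset

lemma hammingWt_eq_hammingNorm {F : Type*} [Zero F] [DecidableEq F] {ℓ : ℕ} (u : Fin ℓ → F) :
    hammingWt u = hammingNorm u := by
  rw [hammingWt, Nat.card_eq_fintype_card, Fintype.card_subtype, hammingNorm]

lemma hammingWt_comp_le {α β : Type*} [Zero α] [Zero β] {ℓ : ℕ} (f : α → β) (hf : f 0 = 0)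
    (u : Fin ℓ → α) : hammingWt (fun i => f (u i)) ≤ hammingWt u := by
  classical
  simpa only [hammingWt_eq_hammingNorm] using
    hammingNorm_comp_le_hammingNorm (fun _ => f) fun _ => hf

section RankWeight

variable (E : Type*) {F : Type*} [Field E] [Field F] [Algebra E F] {N : ℕ}

lemma rankWt_zero : rankWt E (0 : Fin N → F) = 0 := by
  rw [rankWt, Submodule.span_eq_bot.mpr (by rintro _ ⟨j, rfl⟩; rfl), finrank_bot]

lemma rankWt_smul {a : F} (ha : a ≠ 0) (v : Fin N → F) : rankWt E (a • v) = rankWt E v := by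
  let e : F ≃ₗ[E] F := DistribMulAction.toLinearEquiv E F (Units.mk0 a ha)
  rw [rankWt, rankWt, ← e.finrank_map_eq (Submodule.span E (Set.range v)), Submodule.map_span,
    ← Set.range_comp]
  rfl

lemma srWt_tensor {ℓ : ℕ} (u : Fin ℓ → F) (v : Fin N → F) :
    srWt E (fun i => u i • v) = hammingWt u * rankWt E v := by
  classical
  have hblock (i : Fin ℓ) : rankWt E (u i • v) = if u i ≠ 0 then rankWt E v else 0 := by
    split_ifs with h
    · exact rankWt_smul E h v
    · rw [not_not.mp h, zero_smul, rankWt_zero]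
  simp only [srWt, hblock, sum_ite, sum_const_zero, add_zero, sum_const, smul_eq_mul,
    hammingWt_eq_hammingNorm, hammingNorm]

lemma hammingWt_mul_le_srWt {ℓ : ℕ} {c : Fin ℓ → Fin N → F} {d : ℕ}
    (hd : ∀ i, c i ≠ 0 → d ≤ rankWt E (c i)) : hammingWt c * d ≤ srWt E c := by
  classical
  calc hammingWt c * d ≤ ∑ i with c i ≠ 0, rankWt E (c i) := by
        rw [hammingWt_eq_hammingNorm, hammingNorm, ← smul_eq_mul]
        exact card_nsmul_le_sum _ _ _ fun i hi => hd i (mem_filter.mp hi).2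
    _ ≤ srWt E c := sum_le_sum_of_subset (filter_subset _ _)

end RankWeight

section ProductCode

variable {F : Type*} [Field F] {ℓ N : ℕ}
  {C₁ : Submodule F (Fin ℓ → F)} {C₂ : Submodule F (Fin N → F)}

lemma tensor_mem_prodCode {u : Fin ℓ → F} {v : Fin N → F} (hu : u ∈ C₁) (hv : v ∈ C₂) :
    (fun i => u i • v) ∈ prodCode F C₁ C₂ :=
  Submodule.subset_span ⟨u, hu, v, hv, rfl⟩

lemma row_mem_of_mem_prodCode {c : Fin ℓ → Fin N → F} (hc : c ∈ prodCode F C₁ C₂) (i : Fin ℓ) :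
    c i ∈ C₂ := by
  have hle : prodCode F C₁ C₂ ≤ C₂.comap (LinearMap.proj i) := by
    refine Submodule.span_le.mpr ?_
    rintro _ ⟨u, -, v, hv, rfl⟩
    exact C₂.smul_mem (u i) hv
  exact hle hc

lemma col_mem_of_mem_prodCode {c : Fin ℓ → Fin N → F} (hc : c ∈ prodCode F C₁ C₂) (j : Fin N) :
    (fun i => c i j) ∈ C₁ := by
  have hle : prodCode F C₁ C₂ ≤
      C₁.comap (LinearMap.pi fun i => LinearMap.proj j ∘ₗ LinearMap.proj i) := by
    refine Submodule.span_le.mpr ?_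
    rintro _ ⟨u, hu, v, -, rfl⟩
    change (fun i => u i * v j) ∈ C₁
    simp_rw [mul_comm (u _)]
    exact C₁.smul_mem (v j) hu
  exact hle hc

end ProductCode

theorem sumRankDist_prodCode_general (E F : Type*) [Field E] [Field F] [Algebra E F]
    (ℓ N : ℕ)
    (C₁ : Submodule F (Fin ℓ → F)) (C₂ : Submodule F (Fin N → F))
    (dH dR : ℕ)
    (hdH : IsLeast {w : ℕ | ∃ u ∈ C₁, u ≠ 0 ∧ hammingWt u = w} dH)
    (hdR : IsLeast {w : ℕ | ∃ v ∈ C₂, v ≠ 0 ∧ rankWt E v = w} dR) :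
    IsLeast {w : ℕ | ∃ c ∈ prodCode F C₁ C₂, c ≠ 0 ∧ srWt E c = w} (dH * dR) := by
  refine ⟨?_, ?_⟩
  · obtain ⟨u, hu, hu0, rfl⟩ := hdH.1
    obtain ⟨v, hv, hv0, rfl⟩ := hdR.1
    refine ⟨fun i => u i • v, tensor_mem_prodCode hu hv, ?_, ?_⟩
    · obtain ⟨i, hi⟩ := Function.ne_iff.mp hu0
      exact Function.ne_iff.mpr ⟨i, smul_ne_zero hi hv0⟩
    · exact srWt_tensor E u v
  · rintro _ ⟨c, hc, hc0, rfl⟩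
    obtain ⟨i, j, hij⟩ : ∃ i j, c i j ≠ 0 := by simpa [funext_iff] using hc0
    have hcol : dH ≤ hammingWt (fun i => c i j) :=
      hdH.2 ⟨_, col_mem_of_mem_prodCode hc j, Function.ne_iff.mpr ⟨i, hij⟩, rfl⟩
    calc dH * dR ≤ hammingWt c * dR :=
          Nat.mul_le_mul_right _ (hcol.trans (hammingWt_comp_le (· j) rfl c))
      _ ≤ srWt E c :=
          hammingWt_mul_le_srWt E fun i hi => hdR.2 ⟨_, row_mem_of_mem_prodCode hc i, hi, rfl⟩

/-- The minimum sum-rank distance of the product of a nonzero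
Hamming-metric code `C₁` and a nonzero rank-metric code `C₂` is
`d_SR(C₁ ⊗ C₂) = d_H(C₁) · d_R(C₂)`. -/
theorem sumRankDist_prodCode (E F : Type*) [Field E] [Field F] [Algebra E F]
    (ℓ N : ℕ) (hℓ : 0 < ℓ) (hN : 0 < N)
    (C₁ : Submodule F (Fin ℓ → F)) (C₂ : Submodule F (Fin N → F))
    (hC₁ : C₁ ≠ ⊥) (hC₂ : C₂ ≠ ⊥) (dH dR : ℕ)
    (hdH : IsLeast {w : ℕ | ∃ u ∈ C₁, u ≠ 0 ∧ hammingWt u = w} dH)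
    (hdR : IsLeast {w : ℕ | ∃ v ∈ C₂, v ≠ 0 ∧ rankWt E v = w} dR) :
    IsLeast {w : ℕ | ∃ c ∈ prodCode F C₁ C₂, c ≠ 0 ∧ srWt E c = w} (dH * dR) :=
  sumRankDist_prodCode_general E F ℓ N C₁ C₂ dH dR hdH hdR
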